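/- Let W ∈ L²(ℤ_p × ℤ_p), W_in ∈ L²(ℤ_p × ℤ_p), x ∈ L²(ℤ_p), ξ ∈ L²(ℤ_p), and let φ : ℝ → ℝ be Lipschitz with constant L_φ and φ(0) = 0. If 0 < L_φ ‖W‖₂ < 1, then there exists a unique h ∈ L²(ℤ_p) satisfying h(u) = ∫_{ℤ_p} W(u,y) φ(h(y)) dμ(y) + ∫_{ℤ_p} W_in(u,y) x(y) dμ(y) + ξ(u) for μ-almost every u ∈ ℤ_p. -/

import Mathlib

/-!
The right-hand side is the map `H ↦ T_W (φ ∘ H) + T_Win x + ξ` on `L²`, where `T_K` is the integral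
operator with kernel `K`. Cauchy–Schwarz in `y` followed by Tonelli gives the Hilbert–Schmidt bound
`‖T_K‖ ≤ ‖K‖₂`, and composition with `φ` is `Lφ`-Lipschitz on `L²`, so the map is a contraction of
the complete space `L²` with constant at most `Lφ ‖W‖₂ < 1`; Banach's fixed point theorem
concludes.
-/

open MeasureTheory
open scoped NNReal ENNReal

noncomputable instance (p : ℕ) [Fact p.Prime] : MeasurableSpace ℤ_[p] := borel _
instance (p : ℕ) [Fact p.Prime] : BorelSpace ℤ_[p] := ⟨rfl⟩

/-- The normalized Haar measure on the compact additive group `ℤ_[p]`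
(so that `padicHaar p Set.univ = 1`). -/
noncomputable def padicHaar (p : ℕ) [Fact p.Prime] : Measure ℤ_[p] :=
  Measure.addHaarMeasure (⊤ : TopologicalSpace.PositiveCompacts ℤ_[p])

instance padicHaar.instIsAddHaarMeasure (p : ℕ) [Fact p.Prime] :
    (padicHaar p).IsAddHaarMeasure := by
  unfold padicHaar; infer_instance

namespace MeasureTheory

section KernelOperator

variable {α β : Type*} [MeasurableSpace α] [MeasurableSpace β] {μ : Measure α} {ν : Measure β}

lemma eLpNorm_two_rpow_two (f : β → ℝ) :
    eLpNorm f 2 ν ^ (2 : ℝ) = ∫⁻ y, ‖f y‖ₑ ^ (2 : ℝ) ∂ν := by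
  simpa using eLpNorm_nnreal_pow_eq_lintegral (f := f) (μ := ν) (p := 2) two_ne_zero

lemma enorm_integral_mul_le_eLpNorm_mul_eLpNorm {f g : β → ℝ} (hf : AEStronglyMeasurable f ν)
    (hg : AEStronglyMeasurable g ν) :
    ‖∫ y, f y * g y ∂ν‖ₑ ≤ eLpNorm f 2 ν * eLpNorm g 2 ν :=
  calc ‖∫ y, f y * g y ∂ν‖ₑ ≤ eLpNorm (f • g) 1 ν :=
        (enorm_integral_le_lintegral_enorm _).trans_eq eLpNorm_one_eq_lintegral_enorm.symm
    _ ≤ eLpNorm f 2 ν * eLpNorm g 2 ν := eLpNorm_smul_le_mul_eLpNorm hg hf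

variable [SFinite ν] {K : α × β → ℝ}

lemma eLpNorm_two_prod_rpow_two (hK : AEStronglyMeasurable K (μ.prod ν)) :
    eLpNorm K 2 (μ.prod ν) ^ (2 : ℝ) = ∫⁻ u, eLpNorm (fun y ↦ K (u, y)) 2 ν ^ (2 : ℝ) ∂μ := by
  simp_rw [eLpNorm_two_rpow_two]
  exact lintegral_prod _ (hK.enorm.pow_const _)

lemma MemLp.ae_memLp_prodMk_left (hK : MemLp K 2 (μ.prod ν)) :
    ∀ᵐ u ∂μ, MemLp (fun y ↦ K (u, y)) 2 ν := by
  have hfin : ∫⁻ u, ∫⁻ y, ‖K (u, y)‖ₑ ^ (2 : ℝ) ∂ν ∂μ ≠ ∞ := by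
    simp_rw [← eLpNorm_two_rpow_two, ← eLpNorm_two_prod_rpow_two hK.1]
    exact ENNReal.rpow_ne_top_of_nonneg zero_le_two hK.2.ne
  filter_upwards [hK.1.prodMk_left, ae_lt_top' (hK.1.enorm.pow_const _).lintegral_prod_right' hfin]
    with u hmeas hlt
  rw [← eLpNorm_two_rpow_two, ENNReal.rpow_lt_top_iff_of_pos two_pos] at hlt
  exact ⟨hmeas, hlt⟩

lemma eLpNorm_integral_mul_le (hK : AEStronglyMeasurable K (μ.prod ν)) {f : β → ℝ}
    (hf : MemLp f 2 ν) :
    eLpNorm (fun u ↦ ∫ y, K (u, y) * f y ∂ν) 2 μ ≤ eLpNorm K 2 (μ.prod ν) * eLpNorm f 2 ν := by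
  rw [← ENNReal.rpow_le_rpow_iff two_pos, ENNReal.mul_rpow_of_nonneg _ _ zero_le_two,
    eLpNorm_two_prod_rpow_two hK, eLpNorm_two_rpow_two,
    ← lintegral_mul_const' _ _ (ENNReal.rpow_ne_top_of_nonneg zero_le_two hf.2.ne)]
  refine lintegral_mono_ae ?_
  filter_upwards [hK.prodMk_left] with u hu
  rw [← ENNReal.mul_rpow_of_nonneg _ _ zero_le_two]
  gcongr
  exact enorm_integral_mul_le_eLpNorm_mul_eLpNorm hu hf.1

lemma MemLp.integral_mul (hK : MemLp K 2 (μ.prod ν)) {f : β → ℝ} (hf : MemLp f 2 ν) :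
    MemLp (fun u ↦ ∫ y, K (u, y) * f y ∂ν) 2 μ :=
  ⟨(hK.1.mul hf.1.comp_snd).integral_prod_right',
    (eLpNorm_integral_mul_le hK.1 hf).trans_lt (ENNReal.mul_lt_top hK.2 hf.2)⟩

lemma MemLp.ae_integrable_mul (hK : MemLp K 2 (μ.prod ν)) {f : β → ℝ} (hf : MemLp f 2 ν) :
    ∀ᵐ u ∂μ, Integrable (fun y ↦ K (u, y) * f y) ν := by
  filter_upwards [hK.ae_memLp_prodMk_left] with u hu using hu.integrable_mul hf

variable (hK : MemLp K 2 (μ.prod ν))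

lemma MemLp.norm_toLp_integral_mul_le (f : Lp ℝ 2 ν) :
    ‖(hK.integral_mul (Lp.memLp f)).toLp _‖ ≤ (eLpNorm K 2 (μ.prod ν)).toReal * ‖f‖ := by
  rw [Lp.norm_toLp, Lp.norm_def, ← ENNReal.toReal_mul]
  exact ENNReal.toReal_mono (ENNReal.mul_ne_top hK.2.ne (Lp.eLpNorm_ne_top f))
    (eLpNorm_integral_mul_le hK.1 (Lp.memLp f))

noncomputable def hilbertSchmidtOperator : Lp ℝ 2 ν →L[ℝ] Lp ℝ 2 μ :=
  LinearMap.mkContinuous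
    { toFun := fun f ↦ (hK.integral_mul (Lp.memLp f)).toLp _
      map_add' := fun f g ↦ by
        refine ((MemLp.toLp_eq_toLp_iff _ _).2 ?_).trans (MemLp.toLp_add _ _)
        filter_upwards [hK.ae_integrable_mul (Lp.memLp f), hK.ae_integrable_mul (Lp.memLp g)]
          with u hf hg
        rw [Pi.add_apply, ← integral_add hf hg]
        refine integral_congr_ae ?_
        filter_upwards [Lp.coeFn_add f g] with y hy
        rw [hy, Pi.add_apply, mul_add]
      map_smul' := fun c f ↦ by
        refine ((MemLp.toLp_eq_toLp_iff _ _).2 ?_).trans (MemLp.toLp_const_smul _ _)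
        refine Filter.Eventually.of_forall fun u ↦ ?_
        rw [Pi.smul_apply, smul_eq_mul, ← integral_const_mul]
        refine integral_congr_ae ?_
        filter_upwards [Lp.coeFn_smul c f] with y hy
        rw [hy, Pi.smul_apply, smul_eq_mul, RingHom.id_apply, mul_left_comm] }
    (eLpNorm K 2 (μ.prod ν)).toReal
    hK.norm_toLp_integral_mul_le

lemma hilbertSchmidtOperator_ae_eq {f : Lp ℝ 2 ν} {g : β → ℝ} (hfg : f =ᵐ[ν] g) :
    hilbertSchmidtOperator hK f =ᵐ[μ] fun u ↦ ∫ y, K (u, y) * g y ∂ν := by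
  filter_upwards [(hK.integral_mul (Lp.memLp f)).coeFn_toLp] with u hu
  refine hu.trans (integral_congr_ae ?_)
  filter_upwards [hfg] with y hy
  rw [hy]

lemma nnnorm_hilbertSchmidtOperator_le :
    ‖hilbertSchmidtOperator hK‖₊ ≤ (eLpNorm K 2 (μ.prod ν)).toNNReal :=
  LinearMap.mkContinuous_norm_le _ ENNReal.toReal_nonneg _

end KernelOperator

variable {α : Type*} [MeasurableSpace α] {μ : Measure α} [SFinite μ]

theorem existsUnique_Lp_ae_eq_integral_kernel_of_contraction {W Win : α × α → ℝ} {x ξ : α → ℝ}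
    (hW : MemLp W 2 (μ.prod μ)) (hWin : MemLp Win 2 (μ.prod μ)) (hx : MemLp x 2 μ)
    (hξ : MemLp ξ 2 μ) {φ : ℝ → ℝ} {Lφ : ℝ≥0} (hφ : LipschitzWith Lφ φ) (hφ0 : φ 0 = 0)
    (hlt : (Lφ : ℝ≥0∞) * eLpNorm W 2 (μ.prod μ) < 1) :
    ∃! H : Lp ℝ 2 μ, ∀ᵐ u ∂μ,
      H u = ∫ y, W (u, y) * φ (H y) ∂μ + ∫ y, Win (u, y) * x y ∂μ + ξ u := by
  let T := hilbertSchmidtOperator hW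
  let c : Lp ℝ 2 μ := hilbertSchmidtOperator hWin (hx.toLp x) + hξ.toLp ξ
  let F : Lp ℝ 2 μ → Lp ℝ 2 μ := fun H ↦ T (hφ.compLp hφ0 H) + c
  have hF (H : Lp ℝ 2 μ) : F H =ᵐ[μ] fun u ↦
      ∫ y, W (u, y) * φ (H y) ∂μ + ∫ y, Win (u, y) * x y ∂μ + ξ u := by
    filter_upwards [Lp.coeFn_add (T (hφ.compLp hφ0 H)) c,
      Lp.coeFn_add (hilbertSchmidtOperator hWin (hx.toLp x)) (hξ.toLp ξ),
      hilbertSchmidtOperator_ae_eq hW (g := fun y ↦ φ (H y)) (hφ.coeFn_compLp hφ0 H),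
      hilbertSchmidtOperator_ae_eq hWin hx.coeFn_toLp, hξ.coeFn_toLp] with u h₁ h₂ h₃ h₄ h₅
    rw [h₁, Pi.add_apply, h₂, Pi.add_apply, h₃, h₄, h₅, add_assoc]
  have hsolves (H : Lp ℝ 2 μ) : (∀ᵐ u ∂μ, H u = ∫ y, W (u, y) * φ (H y) ∂μ
      + ∫ y, Win (u, y) * x y ∂μ + ξ u) ↔ Function.IsFixedPt F H :=
    ⟨fun h ↦ Lp.ext ((hF H).trans (Filter.EventuallyEq.symm h)),
      fun h ↦ (Lp.ext_iff.1 h.symm).trans (hF H)⟩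
  have hk : ‖T‖₊ * Lφ < 1 := by
    refine lt_of_le_of_lt (mul_le_mul_left (nnnorm_hilbertSchmidtOperator_le hW) _) ?_
    rwa [← ENNReal.coe_lt_one_iff, ENNReal.coe_mul, ENNReal.coe_toNNReal hW.2.ne, mul_comm]
  have hF_contr : ContractingWith (‖T‖₊ * Lφ) F := ⟨hk, by
    simpa only [add_zero, Function.comp_def] using
      (T.lipschitz.comp (hφ.lipschitzWith_compLp hφ0)).add (LipschitzWith.const c)⟩
  refine ⟨hF_contr.fixedPoint F, (hsolves _).2 hF_contr.fixedPoint_isFixedPt, fun H hH ↦ ?_⟩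
  exact hF_contr.fixedPoint_unique ((hsolves H).1 hH)

end MeasureTheory

theorem stmt_4 (p : ℕ) [Fact p.Prime]
    (W Win : ℤ_[p] × ℤ_[p] → ℝ) (x ξ : ℤ_[p] → ℝ)
    (hW : MemLp W 2 ((padicHaar p).prod (padicHaar p)))
    (hWin : MemLp Win 2 ((padicHaar p).prod (padicHaar p)))
    (hx : MemLp x 2 (padicHaar p)) (hξ : MemLp ξ 2 (padicHaar p))
    (φ : ℝ → ℝ) (Lφ : ℝ≥0) (hφ : LipschitzWith Lφ φ) (hφ0 : φ 0 = 0)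
    (hlt : (Lφ : ℝ≥0∞) * eLpNorm W 2 ((padicHaar p).prod (padicHaar p)) < 1) :
    ∃! H : Lp ℝ 2 (padicHaar p),
      ∀ᵐ u ∂(padicHaar p),
        H u = ∫ y, W (u, y) * φ (H y) ∂(padicHaar p)
            + ∫ y, Win (u, y) * x y ∂(padicHaar p) + ξ u :=
  existsUnique_Lp_ae_eq_integral_kernel_of_contraction hW hWin hx hξ hφ hφ0 hlt
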